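/- Let G and H be groups and f : G → H a surjective homomorphism whose kernel is generated by torsion elements. Then the induced map on abelianizations G^{ab} → H^{ab} is surjective with torsion kernel. -/
import Mathlib

/-- If `f : G → H` is a surjective group homomorphism whose kernel is generated by
torsion elements, then the induced map on abelianizations is surjective with torsion kernel. -/
theorem stmt11 {G H : Type*} [Group G] [Group H] (f : G →* H) (hf : Function.Surjective f)
    (hker : f.ker = Subgroup.closure {g : G | g ∈ f.ker ∧ IsOfFinOrder g}) :
    Function.Surjective (Abelianization.map f) ∧
      ∀ x ∈ (Abelianization.map f).ker, IsOfFinOrder x := by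
  constructor
  · intro y
    obtain ⟨h, rfl⟩ := QuotientGroup.mk_surjective y
    obtain ⟨g, rfl⟩ := hf h
    exact ⟨Abelianization.of g, rfl⟩
  · -- every element of ker f maps to a torsion element of Abelianization G
    have hkertor : ∀ k ∈ f.ker, IsOfFinOrder (Abelianization.of k) := by
      intro k hk
      rw [hker] at hk
      have : Subgroup.closure {g : G | g ∈ f.ker ∧ IsOfFinOrder g} ≤
          (CommGroup.torsion (Abelianization G)).comap Abelianization.of := by
        rw [Subgroup.closure_le]
        rintro g ⟨-, hg⟩
        exact Abelianization.of.isOfFinOrder hg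
      exact this hk
    intro x hx
    obtain ⟨g, rfl⟩ := QuotientGroup.mk_surjective x
    have hx' : Abelianization.of (f g) = 1 := by
      rw [← Abelianization.map_of f g]; exact hx
    have hfg : f g ∈ commutator H := (QuotientGroup.eq_one_iff _).mp hx'
    have hcomm : commutator H = Subgroup.map f (commutator G) := by
      rw [commutator, commutator, Subgroup.map_commutator,
        Subgroup.map_top_of_surjective f hf]
    rw [hcomm] at hfg
    obtain ⟨c, hc, hfc⟩ := hfg
    have hk : g * c⁻¹ ∈ f.ker := by
      simp [MonoidHom.mem_ker, ← hfc]
    have hoc : Abelianization.of c = 1 := (QuotientGroup.eq_one_iff _).mpr hc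
    have : Abelianization.of g = Abelianization.of (g * c⁻¹) := by
      simp [map_mul, hoc]
    show IsOfFinOrder (Abelianization.of g)
    rw [this]
    exact hkertor _ hk
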